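/- Let S = (R_i)_{i∈I} be a family of fuzzy relations on U, let P be a fuzzy preorder on U, and let x ∈ L. Then for each k ∈ {1,2,3}: x ≤ SD_k(S)(P) if and only if x ≤ SD_{k+3}(S)(P). -/
import Mathlib


/-- A complete residuated lattice: a complete lattice with a commutative monoid
operation `otimes` whose unit is the top element, distributing over arbitrary
suprema, together with its residuum `res` characterized by the adjunction. -/
class CRL (L : Type*) extends CompleteLattice L where
  /-- the multiplication ⊗ -/
  otimes : L → L → L
  otimes_comm : ∀ a b : L, otimes a b = otimes b a
  otimes_assoc : ∀ a b c : L, otimes (otimes a b) c = otimes a (otimes b c)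
  otimes_top : ∀ a : L, otimes a ⊤ = a
  otimes_sSup : ∀ (a : L) (s : Set L), otimes a (sSup s) = ⨆ b ∈ s, otimes a b
  /-- the residuum → -/
  res : L → L → L
  otimes_le_iff : ∀ a b c : L, otimes a b ≤ c ↔ a ≤ res b c

variable {L : Type*} [CRL L] {U : Type*}

/-- The biresiduum x ↔ y = (x → y) ⊓ (y → x). -/
def bres (a b : L) : L := CRL.res a b ⊓ CRL.res b a

/-- Composition of fuzzy relations: (R ∘ P)(u,v) = ⨆ w, R(u,w) ⊗ P(w,v). -/
def fcomp (R P : U → U → L) : U → U → L :=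
  fun u v => ⨆ w, CRL.otimes (R u w) (P w v)

/-- Inclusion degree of fuzzy relations: R ≲ Q. -/
def incl (R Q : U → U → L) : L := ⨅ u, ⨅ v, CRL.res (R u v) (Q u v)

/-- Equality degree of fuzzy relations: R ≈ Q. -/
def eqd (R Q : U → U → L) : L := ⨅ u, ⨅ v, bres (R u v) (Q u v)

/-- SD_1(S)(X) = ⨅ i, ((X ∘ R_i) ≲ (R_i ∘ X)). -/
def SD1 {I : Type*} (S : I → U → U → L) (X : U → U → L) : L :=
  ⨅ i, incl (fcomp X (S i)) (fcomp (S i) X)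

/-- SD_2(S)(X) = ⨅ i, ((R_i ∘ X) ≲ (X ∘ R_i)). -/
def SD2 {I : Type*} (S : I → U → U → L) (X : U → U → L) : L :=
  ⨅ i, incl (fcomp (S i) X) (fcomp X (S i))

/-- SD_3(S)(X) = SD_1(S)(X) ⊓ SD_2(S)(X). -/
def SD3 {I : Type*} (S : I → U → U → L) (X : U → U → L) : L :=
  SD1 S X ⊓ SD2 S X

/-- A fuzzy preorder: reflexive (P(u,u) = 1 = ⊤) and transitive (P ∘ P ≤ P). -/
def IsFuzzyPreorder (P : U → U → L) : Prop :=
  (∀ u, P u u = ⊤) ∧ fcomp P P ≤ P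

/-- SD_4(S)(X) = ⨅ i, ((X ∘ R_i ∘ X) ≈ (R_i ∘ X)). -/
def SD4 {I : Type*} (S : I → U → U → L) (X : U → U → L) : L :=
  ⨅ i, eqd (fcomp (fcomp X (S i)) X) (fcomp (S i) X)

/-- SD_5(S)(X) = ⨅ i, ((X ∘ R_i ∘ X) ≈ (X ∘ R_i)). -/
def SD5 {I : Type*} (S : I → U → U → L) (X : U → U → L) : L :=
  ⨅ i, eqd (fcomp (fcomp X (S i)) X) (fcomp X (S i))

/-- SD_6(S)(X) = SD_4(S)(X) ⊓ SD_5(S)(X). -/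
def SD6 {I : Type*} (S : I → U → U → L) (X : U → U → L) : L :=
  SD4 S X ⊓ SD5 S X

section Aux

lemma ot_mono_left {a b : L} (h : a ≤ b) (c : L) : CRL.otimes a c ≤ CRL.otimes b c :=
  (CRL.otimes_le_iff a c _).2 (h.trans ((CRL.otimes_le_iff b c _).1 le_rfl))

lemma ot_mono_right (a : L) {b c : L} (h : b ≤ c) : CRL.otimes a b ≤ CRL.otimes a c := by
  rw [CRL.otimes_comm a b, CRL.otimes_comm a c]; exact ot_mono_left h a

lemma top_ot (a : L) : CRL.otimes ⊤ a = a := by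
  rw [CRL.otimes_comm]; exact CRL.otimes_top a

lemma ot_le_right (a b : L) : CRL.otimes a b ≤ b :=
  (ot_mono_left le_top b).trans_eq (top_ot b)

lemma ot_iSup {ι : Sort*} (a : L) (f : ι → L) :
    CRL.otimes a (⨆ i, f i) = ⨆ i, CRL.otimes a (f i) := by
  rw [iSup, CRL.otimes_sSup, iSup_range]

lemma ot_iSup_left {ι : Sort*} (a : L) (f : ι → L) :
    CRL.otimes (⨆ i, f i) a = ⨆ i, CRL.otimes (f i) a := by
  rw [CRL.otimes_comm, ot_iSup]
  simp only [CRL.otimes_comm]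

lemma le_incl_iff {x : L} {A B : U → U → L} :
    x ≤ incl A B ↔ ∀ u v, CRL.otimes x (A u v) ≤ B u v := by
  simp only [incl, le_iInf_iff]
  constructor
  · intro h u v; exact (CRL.otimes_le_iff x (A u v) (B u v)).2 (h u v)
  · intro h u v; exact (CRL.otimes_le_iff x (A u v) (B u v)).1 (h u v)

lemma incl_of_le {x : L} {A B : U → U → L} (h : A ≤ B) : x ≤ incl A B := by
  rw [le_incl_iff]
  intro u v
  exact (ot_le_right x (A u v)).trans (h u v)

lemma le_incl_of_le_left {x : L} {A A' B : U → U → L} (hA : A ≤ A')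
    (h : x ≤ incl A' B) : x ≤ incl A B := by
  rw [le_incl_iff] at h ⊢
  intro u v
  exact (ot_mono_right x (hA u v)).trans (h u v)

lemma le_eqd_iff {x : L} {A B : U → U → L} :
    x ≤ eqd A B ↔ x ≤ incl A B ∧ x ≤ incl B A := by
  simp only [eqd, incl, bres, le_iInf_iff, le_inf_iff, forall_and]

lemma fcomp_mono {A A' B B' : U → U → L} (hA : A ≤ A') (hB : B ≤ B') :
    fcomp A B ≤ fcomp A' B' := by
  intro u v
  exact iSup_mono fun w => (ot_mono_left (hA u w) _).trans (ot_mono_right _ (hB w v))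

lemma le_fcomp_term (A B : U → U → L) (u w v : U) :
    CRL.otimes (A u w) (B w v) ≤ fcomp A B u v :=
  le_iSup (fun w => CRL.otimes (A u w) (B w v)) w

lemma fcomp_assoc (A B C : U → U → L) :
    fcomp (fcomp A B) C = fcomp A (fcomp B C) := by
  funext u v
  simp only [fcomp, ot_iSup_left, ot_iSup, CRL.otimes_assoc]
  exact iSup_comm

lemma le_fcomp_right {P : U → U → L} (hrefl : ∀ u, P u u = ⊤) (A : U → U → L) :
    A ≤ fcomp A P := by
  intro u v
  have := le_fcomp_term A P u v v
  rwa [hrefl, CRL.otimes_top] at this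

lemma le_fcomp_left {P : U → U → L} (hrefl : ∀ u, P u u = ⊤) (A : U → U → L) :
    A ≤ fcomp P A := by
  intro u v
  have := le_fcomp_term P A u u v
  rwa [hrefl, top_ot] at this

lemma key1 {x : L} (P R : U → U → L) (hP : IsFuzzyPreorder P) :
    x ≤ incl (fcomp P R) (fcomp R P) ↔
      x ≤ eqd (fcomp (fcomp P R) P) (fcomp R P) := by
  obtain ⟨hrefl, htrans⟩ := hP
  rw [le_eqd_iff]
  constructor
  · intro h
    refine ⟨?_, incl_of_le (fcomp_mono (le_fcomp_left hrefl R) le_rfl)⟩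
    rw [le_incl_iff] at h ⊢
    intro u v
    show CRL.otimes x (⨆ w, CRL.otimes (fcomp P R u w) (P w v)) ≤ _
    rw [ot_iSup]
    refine iSup_le fun w => ?_
    calc CRL.otimes x (CRL.otimes (fcomp P R u w) (P w v))
        = CRL.otimes (CRL.otimes x (fcomp P R u w)) (P w v) :=
          (CRL.otimes_assoc _ _ _).symm
      _ ≤ CRL.otimes (fcomp R P u w) (P w v) := ot_mono_left (h u w) _
      _ ≤ fcomp (fcomp R P) P u v := le_fcomp_term _ _ u w v
      _ ≤ fcomp R P u v := by
          rw [fcomp_assoc]; exact fcomp_mono le_rfl htrans u v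
  · intro h
    exact le_incl_of_le_left (le_fcomp_right hrefl (fcomp P R)) h.1

lemma key2 {x : L} (P R : U → U → L) (hP : IsFuzzyPreorder P) :
    x ≤ incl (fcomp R P) (fcomp P R) ↔
      x ≤ eqd (fcomp (fcomp P R) P) (fcomp P R) := by
  obtain ⟨hrefl, htrans⟩ := hP
  rw [le_eqd_iff]
  constructor
  · intro h
    refine ⟨?_, incl_of_le (le_fcomp_right hrefl (fcomp P R))⟩
    rw [le_incl_iff] at h ⊢
    intro u v
    rw [fcomp_assoc]
    show CRL.otimes x (⨆ w, CRL.otimes (P u w) (fcomp R P w v)) ≤ _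
    rw [ot_iSup]
    refine iSup_le fun w => ?_
    calc CRL.otimes x (CRL.otimes (P u w) (fcomp R P w v))
        = CRL.otimes (P u w) (CRL.otimes x (fcomp R P w v)) := by
          rw [← CRL.otimes_assoc, CRL.otimes_comm x (P u w), CRL.otimes_assoc]
      _ ≤ CRL.otimes (P u w) (fcomp P R w v) := ot_mono_right _ (h w v)
      _ ≤ fcomp P (fcomp P R) u v := le_fcomp_term _ _ u w v
      _ ≤ fcomp P R u v := by
          rw [← fcomp_assoc]; exact fcomp_mono htrans le_rfl u v
  · intro h
    exact le_incl_of_le_left (fcomp_mono (le_fcomp_left hrefl R) le_rfl) h.1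

end Aux

/-- For a fuzzy preorder P and each k ∈ {1,2,3}:
x ≤ SD_k(S)(P) iff x ≤ SD_{k+3}(S)(P). -/
theorem stmt15 [Nonempty U] {I : Type*} (S : I → U → U → L) (P : U → U → L)
    (hP : IsFuzzyPreorder P) (x : L) :
    (x ≤ SD1 S P ↔ x ≤ SD4 S P) ∧
    (x ≤ SD2 S P ↔ x ≤ SD5 S P) ∧
    (x ≤ SD3 S P ↔ x ≤ SD6 S P) := by
  have h1 : x ≤ SD1 S P ↔ x ≤ SD4 S P := by
    simp only [SD1, SD4, le_iInf_iff]
    exact forall_congr' fun i => key1 P (S i) hP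
  have h2 : x ≤ SD2 S P ↔ x ≤ SD5 S P := by
    simp only [SD2, SD5, le_iInf_iff]
    exact forall_congr' fun i => key2 P (S i) hP
  refine ⟨h1, h2, ?_⟩
  simp only [SD3, SD6, le_inf_iff]
  exact and_congr h1 h2
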